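/- arXiv:2507.03862 — 5 statements merged into one kernel-verified Lean document; each statement's English description precedes it below -/
import Mathlib

section
/- Let N ≥ 1 be an integer, q = exp(2πi/N), and let j be an integer with 0 ≤ j ≤ N−1 such that N − j is even. Then for every z ∈ ℂ with z^{2N} ≠ 1 one has z²·Σ_{l=0}^{N−1} q^{(N−j)l/2}/(q^l − z²) = N·z^{N−j}/(1 − z^{2N}). -/
open Finset

/-- Monic OPUC associated to a sequence of (real) Verblunsky parameters. -/
noncomputable def Phi (c : ℕ → ℝ) : ℕ → ℂ → ℂ
  | 0, _ => 1
  | n + 1, z => z * Phi c n z - (c n : ℂ) * z ^ n * Phi c n z⁻¹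

/-- CMV Laurent polynomials: ψ_{2m} z = z^m Φ_{2m}(1/z), ψ_{2m+1} z = z^{-m} Φ_{2m+1}(z). -/
noncomputable def psi (c : ℕ → ℝ) (n : ℕ) (z : ℂ) : ℂ :=
  if Even n then z ^ (n / 2) * Phi c n z⁻¹
  else z ^ (-((n / 2 : ℕ) : ℤ)) * Phi c n z

/-- Verblunsky parameters of the Jacobi OPUC. -/
noncomputable def jacobiA (α β : ℝ) (n : ℕ) : ℝ :=
  -(α + 1 / 2 + (-1 : ℝ) ^ (n + 1) * (β + 1 / 2)) / (n + α + β + 2)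

/-- Sieved Verblunsky parameters: a_n(N) = a_{k-1} if n = N k - 1 (k ≥ 1), 0 otherwise. -/
noncomputable def sievedA (α β : ℝ) (N n : ℕ) : ℝ :=
  if N ∣ (n + 1) then jacobiA α β ((n + 1) / N - 1) else 0

/-- The primitive N-th root of unity q = exp(2πi/N). -/
noncomputable def qN (N : ℕ) : ℂ := Complex.exp (2 * Real.pi * Complex.I / N)

/-- The coefficients A_k(z;N) of the Dunkl-type operator L(N). -/
noncomputable def Acoef (α β : ℝ) (N k : ℕ) (z : ℂ) : ℂ :=
  if Even N then
    ((α : ℂ) + β + 1 + (-1 : ℂ) ^ k * ((α : ℂ) - β)) * z ^ 2 / (qN N ^ k - z ^ 2)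
  else
    (((α : ℂ) + β + 1) * z ^ 2 +
        (if Even k then qN N ^ ((k : ℤ) / 2) else qN N ^ (((k : ℤ) - (N : ℤ)) / 2)) *
          ((α : ℂ) - β) * z) /
      (qN N ^ k - z ^ 2)

/-- B(z) = N((α+β+1) z^{2N} + (α-β) z^N)/(z^{2N} - 1). -/
noncomputable def Bfun (α β : ℝ) (N : ℕ) (z : ℂ) : ℂ :=
  (N : ℂ) * (((α : ℂ) + β + 1) * z ^ (2 * N) + ((α : ℂ) - β) * z ^ N) / (z ^ (2 * N) - 1)

/-- The Dunkl-type operator L(N). -/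
noncomputable def Lop (α β : ℝ) (N : ℕ) (f : ℂ → ℂ) : ℂ → ℂ := fun z =>
  z * deriv f z + ∑ k ∈ Finset.range N, Acoef α β N k z * (f (qN N ^ k / z) - f z)

/-- A function ℂ∖{0} → ℂ is a Laurent polynomial. -/
def IsLaurentPoly (f : ℂ → ℂ) : Prop :=
  ∃ (m : ℕ) (p : Polynomial ℂ), ∀ z : ℂ, z ≠ 0 → f z = Polynomial.eval z p / z ^ m

/-- Sieved Jacobi polynomial of the first kind, as a function of z (x = z + 1/z). -/
noncomputable def sievP (α β : ℝ) (N n : ℕ) (z : ℂ) : ℂ :=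
  psi (sievedA α β N) (2 * n) z
    + (1 + (sievedA α β N (2 * n - 1) : ℂ)) * psi (sievedA α β N) (2 * n - 1) z

/-- χ_n(z) = (z - 1/z) Q_{n-1}(x(z)), with Q the sieved Jacobi polynomial of 2nd kind. -/
noncomputable def sievChi (α β : ℝ) (N n : ℕ) (z : ℂ) : ℂ :=
  -psi (sievedA α β N) (2 * n) z
    + (1 - (sievedA α β N (2 * n - 1) : ℂ)) * psi (sievedA α β N) (2 * n - 1) z

/-- for q = exp(2πi/N) and 0 ≤ j ≤ N-1 with N - j even,
z² Σ_{l=0}^{N-1} q^{(N-j)l/2}/(q^l - z²) = N z^{N-j}/(1 - z^{2N}) whenever z^{2N} ≠ 1. -/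
theorem stmt_2 (N : ℕ) (hN : 1 ≤ N) (j : ℕ) (hjN : j ≤ N - 1) (hNj : Even (N - j)) (z : ℂ)
    (hz : z ^ (2 * N) ≠ 1) :
    z ^ 2 * ∑ l ∈ Finset.range N, qN N ^ ((N - j) * l / 2) / (qN N ^ l - z ^ 2)
      = (N : ℂ) * z ^ (N - j) / (1 - z ^ (2 * N)) := by
  set q := qN N with hqdef
  have hNne : N ≠ 0 := by omega
  have hprim : IsPrimitiveRoot q N := Complex.isPrimitiveRoot_exp N hNne
  have hq1 : q ^ N = 1 := hprim.pow_eq_one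
  have hq0 : q ≠ 0 := hprim.ne_zero hNne
  obtain ⟨m, hm⟩ := hNj
  have hm1 : 1 ≤ m := by omega
  have hmN : m ≤ N := by omega
  have hden : (1 : ℂ) - z ^ (2 * N) ≠ 0 := sub_ne_zero.mpr (Ne.symm hz)
  have hterm : ∀ l ∈ Finset.range N, q ^ l - z ^ 2 ≠ 0 := by
    intro l _ h
    apply hz
    have hzq : z ^ 2 = q ^ l := (sub_eq_zero.mp h).symm
    calc z ^ (2 * N) = (z ^ 2) ^ N := by rw [pow_mul]
      _ = (q ^ l) ^ N := by rw [hzq]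
      _ = (q ^ N) ^ l := by rw [← pow_mul, ← pow_mul, mul_comm]
      _ = 1 := by rw [hq1, one_pow]
  have hqzN : q ^ (N : ℤ) = 1 := by rw [zpow_natCast]; exact hq1
  -- per-term identity
  have step1 : ∀ l ∈ Finset.range N, q ^ ((N - j) * l / 2) / (q ^ l - z ^ 2)
      = (∑ k ∈ Finset.range N, q ^ (((m : ℤ) - 1 - (k : ℤ)) * (l : ℤ)) * z ^ (2 * k))
        / (1 - z ^ (2 * N)) := by
    intro l hl
    have hexp : (N - j) * l / 2 = m * l := by
      rw [hm, show (m + m) * l = 2 * (m * l) by ring, Nat.mul_div_cancel_left _ two_pos]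
    rw [hexp, div_eq_div_iff (hterm l hl) hden]
    have tele := Finset.sum_range_sub'
      (fun k : ℕ => q ^ (((m : ℤ) - (k : ℤ)) * (l : ℤ)) * z ^ (2 * k)) N
    have hNl : q ^ ((N : ℤ) * (l : ℤ)) = 1 := by rw [zpow_mul, hqzN, one_zpow]
    have hqmN : q ^ (((m : ℤ) - (N : ℤ)) * (l : ℤ)) = q ^ ((m : ℤ) * (l : ℤ)) := by
      rw [show ((m : ℤ) - N) * l = (m : ℤ) * l - (N : ℤ) * l by ring, zpow_sub₀ hq0, hNl,
        div_one]
    have expand : (∑ k ∈ Finset.range N,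
          q ^ (((m : ℤ) - 1 - (k : ℤ)) * (l : ℤ)) * z ^ (2 * k)) * (q ^ l - z ^ 2)
        = ∑ k ∈ Finset.range N,
            (q ^ (((m : ℤ) - (k : ℤ)) * (l : ℤ)) * z ^ (2 * k)
              - q ^ (((m : ℤ) - ((k + 1 : ℕ) : ℤ)) * (l : ℤ)) * z ^ (2 * (k + 1))) := by
      rw [Finset.sum_mul]
      refine Finset.sum_congr rfl fun k _ => ?_
      have h1 : q ^ (((m : ℤ) - 1 - (k : ℤ)) * (l : ℤ)) * q ^ l
          = q ^ (((m : ℤ) - (k : ℤ)) * (l : ℤ)) := by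
        rw [← zpow_natCast q l, ← zpow_add₀ hq0]
        congr 1; ring
      have h2 : q ^ (((m : ℤ) - ((k + 1 : ℕ) : ℤ)) * (l : ℤ))
          = q ^ (((m : ℤ) - 1 - (k : ℤ)) * (l : ℤ)) := by
        rw [show ((m : ℤ) - ((k + 1 : ℕ) : ℤ)) * (l : ℤ)
          = ((m : ℤ) - 1 - (k : ℤ)) * (l : ℤ) by push_cast; ring]
      have h3 : z ^ (2 * (k + 1)) = z ^ (2 * k) * z ^ 2 := by ring
      rw [← h1, h2, h3]
      ring
    rw [expand, tele, hqmN]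
    have hml0 : q ^ (((m : ℤ) - (0 : ℕ)) * (l : ℤ)) = q ^ (m * l) := by
      rw [show ((m : ℤ) - ((0 : ℕ) : ℤ)) * l = ((m * l : ℕ) : ℤ) by push_cast; ring,
        zpow_natCast]
    have hml2 : q ^ ((m : ℤ) * (l : ℤ)) = q ^ (m * l) := by
      rw [show (m : ℤ) * l = ((m * l : ℕ) : ℤ) by push_cast; ring, zpow_natCast]
    rw [hml0, hml2]
    ring
  rw [Finset.sum_congr rfl step1, ← Finset.sum_div]
  have swap : ∑ l ∈ Finset.range N, ∑ k ∈ Finset.range N,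
        q ^ (((m : ℤ) - 1 - (k : ℤ)) * (l : ℤ)) * z ^ (2 * k)
      = ∑ k ∈ Finset.range N, z ^ (2 * k)
          * ∑ l ∈ Finset.range N, (q ^ ((m : ℤ) - 1 - (k : ℤ))) ^ l := by
    rw [Finset.sum_comm]
    refine Finset.sum_congr rfl fun k _ => ?_
    rw [Finset.mul_sum]
    refine Finset.sum_congr rfl fun l _ => ?_
    rw [← zpow_natCast (q ^ ((m : ℤ) - 1 - (k : ℤ))) l, ← zpow_mul]
    ring
  rw [swap]
  have geom : ∀ k ∈ Finset.range N,
      z ^ (2 * k) * ∑ l ∈ Finset.range N, (q ^ ((m : ℤ) - 1 - (k : ℤ))) ^ l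
      = if k = m - 1 then z ^ (2 * k) * N else 0 := by
    intro k hk
    simp only [Finset.mem_range] at hk
    by_cases hkm : k = m - 1
    · subst hkm
      have he : (m : ℤ) - 1 - ((m - 1 : ℕ) : ℤ) = 0 := by omega
      rw [if_pos rfl, he, zpow_zero]
      simp
    · rw [if_neg hkm]
      set e : ℤ := (m : ℤ) - 1 - (k : ℤ) with hedef
      have hωN : (q ^ e) ^ N = 1 := by
        rw [← zpow_natCast (q ^ e) N, ← zpow_mul, mul_comm, zpow_mul, hqzN, one_zpow]
      have hω1 : q ^ e ≠ 1 := by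
        intro h
        have hd : (N : ℤ) ∣ e := (hprim.zpow_eq_one_iff_dvd e).mp h
        have he0 : e = 0 := Int.eq_zero_of_abs_lt_dvd hd (by rw [abs_lt]; omega)
        omega
      rw [geom_sum_eq hω1 N, hωN, sub_self, zero_div, mul_zero]
  rw [Finset.sum_congr rfl geom,
    Finset.sum_ite_eq' (Finset.range N) (m - 1) (fun k => z ^ (2 * k) * N),
    if_pos (Finset.mem_range.mpr (by omega))]
  have hzp : z ^ 2 * (z ^ (2 * (m - 1)) * N) = (N : ℂ) * z ^ (N - j) := by
    rw [show z ^ 2 * (z ^ (2 * (m - 1)) * N) = (N : ℂ) * (z ^ 2 * z ^ (2 * (m - 1))) by ring,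
      ← pow_add, show 2 + 2 * (m - 1) = N - j by omega]
  rw [← hzp]
  ring
end

section
/- For every integer n ≥ 0 and every z ∈ ℂ with z ≠ 0 and z² ≠ 1, the CMV Laurent polynomials ψ_n(z;1) associated with the Jacobi Verblunsky parameters (a_n) satisfy the Dunkl-type eigenvalue equation z·(d/dz)ψ_n(z;1) + [z·((α+β+1)z + α−β)/(1−z²)]·(ψ_n(1/z;1) − ψ_n(z;1)) = μ_n·ψ_n(z;1), where μ_n = −n/2 if n is even and μ_n = (n+1)/2 + α + β + 1 if n is odd. -/
open Finset

/-! The CMV recursion reads ψ_{2m+1}(z) = z ψ_{2m}(1/z) − a_{2m} ψ_{2m}(z) and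
ψ_{2m+2}(z) = ψ_{2m+1}(1/z) − a_{2m+1} ψ_{2m+1}(z). Write the operator of the theorem as
D f(z) = z f'(z) + z(sz + d)/(1 − z²) (f(1/z) − f(z)) with s = α + β + 1, d = α − β. It
interacts simply with the two operations in the recursion:
D(f ∘ inv) = −(D f) ∘ inv + s (f ∘ inv − f) and D(z k) = z D k + z k + (sz + d) k ∘ inv.
Hence both steps of the recursion carry an eigenfunction of D to an eigenfunction, provided the
Verblunsky parameter satisfies one linear relation with the old eigenvalue; the Jacobi parameters
are exactly the solutions of these relations, starting from ψ₀ = 1 with eigenvalue 0. -/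

noncomputable def dunkl (s d : ℂ) (f : ℂ → ℂ) (z : ℂ) : ℂ :=
  z * deriv f z + z * (s * z + d) / (1 - z ^ 2) * (f z⁻¹ - f z)

lemma inv_sq_ne_one {z : ℂ} (hz2 : z ^ 2 ≠ 1) : z⁻¹ ^ 2 ≠ 1 := by
  rwa [inv_pow, inv_ne_one]

section Dunkl

variable {s d : ℂ} {f g : ℂ → ℂ} {z : ℂ}

lemma dunkl_sub_const_mul (a : ℂ) (hf : DifferentiableAt ℂ f z) (hg : DifferentiableAt ℂ g z) :
    dunkl s d (fun w => f w - a * g w) z = dunkl s d f z - a * dunkl s d g z := by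
  have hderiv : deriv (fun w => f w - a * g w) z = deriv f z - a * deriv g z :=
    (hf.hasDerivAt.sub (hg.hasDerivAt.const_mul a)).deriv
  simp only [dunkl, hderiv]
  ring

lemma dunkl_comp_inv (hz : z ≠ 0) (hz2 : z ^ 2 ≠ 1) (hf : DifferentiableAt ℂ f z⁻¹) :
    dunkl s d (fun w => f w⁻¹) z = -dunkl s d f z⁻¹ + s * (f z⁻¹ - f z) := by
  have hderiv := (hf.hasDerivAt.comp z (hasDerivAt_inv hz)).deriv
  have h1z : 1 - z ^ 2 ≠ 0 := sub_ne_zero.mpr (Ne.symm hz2)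
  have h1z' : 1 - z⁻¹ ^ 2 ≠ 0 := sub_ne_zero.mpr (Ne.symm (inv_sq_ne_one hz2))
  simp only [dunkl, Function.comp_def] at hderiv ⊢
  rw [hderiv, inv_inv]
  field_simp
  ring

lemma dunkl_id_mul (hz : z ≠ 0) (hz2 : z ^ 2 ≠ 1) (hf : DifferentiableAt ℂ f z) :
    dunkl s d (fun w => w * f w) z = z * dunkl s d f z + z * f z + (s * z + d) * f z⁻¹ := by
  have hderiv : deriv (fun w => w * f w) z = f z + z * deriv f z :=
    ((hasDerivAt_id' z).mul hf.hasDerivAt).deriv.trans (by rw [one_mul])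
  have h1z : 1 - z ^ 2 ≠ 0 := sub_ne_zero.mpr (Ne.symm hz2)
  simp only [dunkl, hderiv]
  field_simp
  ring

end Dunkl

def IsDunklEigen (s d μ : ℂ) (f : ℂ → ℂ) : Prop :=
  (∀ z ≠ 0, DifferentiableAt ℂ f z) ∧ ∀ z ≠ 0, z ^ 2 ≠ 1 → dunkl s d f z = μ * f z

namespace IsDunklEigen

variable {s d μ : ℂ} {f : ℂ → ℂ}

lemma const_one : IsDunklEigen s d 0 (fun _ => 1) :=
  ⟨fun _ _ => differentiableAt_const 1, fun z _ _ => by simp [dunkl]⟩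

lemma congr {g : ℂ → ℂ} (hf : IsDunklEigen s d μ f) (hfg : Set.EqOn f g {0}ᶜ) :
    IsDunklEigen s d μ g := by
  have hev : ∀ z ≠ (0 : ℂ), f =ᶠ[nhds z] g := fun z hz =>
    Filter.mem_of_superset (isOpen_compl_singleton.mem_nhds hz) hfg
  refine ⟨fun z hz => (hf.1 z hz).congr_of_eventuallyEq (hev z hz).symm, fun z hz hz2 => ?_⟩
  have hval : dunkl s d g z = dunkl s d f z := by
    simp only [dunkl, (hev z hz).deriv_eq, hfg (inv_ne_zero hz), hfg hz]
  rw [hval, hf.2 z hz hz2, hfg hz]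

lemma comp_inv (hf : IsDunklEigen s d μ f) {z : ℂ} (hz : z ≠ 0) :
    DifferentiableAt ℂ (fun w => f w⁻¹) z :=
  (hf.1 z⁻¹ (inv_ne_zero hz)).comp z (differentiableAt_inv hz)

lemma reflect_sub (hf : IsDunklEigen s d μ f) {a : ℂ} (ha : a * (s - 2 * μ) = s) :
    IsDunklEigen s d (s - μ) (fun z => f z⁻¹ - a * f z) := by
  refine ⟨fun z hz => (hf.comp_inv hz).sub ((hf.1 z hz).const_mul a), fun z hz hz2 => ?_⟩
  have hinv := hf.2 z⁻¹ (inv_ne_zero hz) (inv_sq_ne_one hz2)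
  rw [dunkl_sub_const_mul a (hf.comp_inv hz) (hf.1 z hz),
    dunkl_comp_inv hz hz2 (hf.1 z⁻¹ (inv_ne_zero hz)), hinv, hf.2 z hz hz2]
  linear_combination f z * ha

lemma mul_reflect_sub (hf : IsDunklEigen s d μ f) {a : ℂ} (ha : a * (2 * μ - s - 1) = d) :
    IsDunklEigen s d (s + 1 - μ) (fun z => z * f z⁻¹ - a * f z) := by
  have hdiff : ∀ z ≠ 0, DifferentiableAt ℂ (fun w => w * f w⁻¹) z := fun z hz =>
    differentiableAt_id.mul (hf.comp_inv hz)
  refine ⟨fun z hz => (hdiff z hz).sub ((hf.1 z hz).const_mul a), fun z hz hz2 => ?_⟩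
  have hinv := hf.2 z⁻¹ (inv_ne_zero hz) (inv_sq_ne_one hz2)
  rw [dunkl_sub_const_mul a (hdiff z hz) (hf.1 z hz),
    dunkl_id_mul (f := fun w => f w⁻¹) hz hz2 (hf.comp_inv hz),
    dunkl_comp_inv hz hz2 (hf.1 z⁻¹ (inv_ne_zero hz)), hinv, hf.2 z hz hz2, inv_inv]
  linear_combination -(f z) * ha

end IsDunklEigen

section CMV

variable (c : ℕ → ℝ)

lemma psi_zero : psi c 0 = fun _ => 1 := by
  funext z
  simp [psi, Phi]

lemma psi_two_mul (m : ℕ) (z : ℂ) : psi c (2 * m) z = z ^ m * Phi c (2 * m) z⁻¹ := by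
  simp [psi]

lemma psi_two_mul_add_one (m : ℕ) (z : ℂ) :
    psi c (2 * m + 1) z = z ^ (-(m : ℤ)) * Phi c (2 * m + 1) z := by
  rw [psi, if_neg (Nat.not_even_bit1 m), show (2 * m + 1) / 2 = m by omega]

lemma psi_two_mul_add_one_eqOn (m : ℕ) :
    Set.EqOn (fun z => z * psi c (2 * m) z⁻¹ - (c (2 * m) : ℂ) * psi c (2 * m) z)
      (psi c (2 * m + 1)) {0}ᶜ := by
  intro z hz
  have hz : z ≠ 0 := hz
  simp only [psi_two_mul, psi_two_mul_add_one, Phi, inv_inv, zpow_neg, zpow_natCast, inv_pow]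
  field_simp
  ring

-- Not an equality at `z = 0`, where `psi` takes junk values; this is why `IsDunklEigen`
-- only looks at `f` on `ℂ∖{0}`.
lemma psi_two_mul_add_two_eqOn (m : ℕ) :
    Set.EqOn (fun z => psi c (2 * m + 1) z⁻¹ - (c (2 * m + 1) : ℂ) * psi c (2 * m + 1) z)
      (psi c (2 * (m + 1))) {0}ᶜ := by
  intro z hz
  have hz : z ≠ 0 := hz
  dsimp only
  rw [psi_two_mul, psi_two_mul_add_one, psi_two_mul_add_one, mul_add_one]
  simp only [Phi, inv_inv, zpow_neg, zpow_natCast, inv_pow]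
  field_simp
  ring

end CMV

section Jacobi

variable {α β : ℝ}

lemma jacobiA_two_mul (m : ℕ) :
    jacobiA α β (2 * m) = -(α - β) / (2 * m + α + β + 2) := by
  rw [jacobiA, Odd.neg_one_pow ⟨m, rfl⟩]
  push_cast
  ring_nf

lemma jacobiA_two_mul_add_one (m : ℕ) :
    jacobiA α β (2 * m + 1) = -(α + β + 1) / (2 * m + α + β + 3) := by
  rw [jacobiA, Even.neg_one_pow ⟨m + 1, by ring⟩]
  push_cast
  ring_nf

lemma IsDunklEigen.psi_jacobiA_two_mul_add_one (hαβ : 0 < α + β + 2) {m : ℕ}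
    (h : IsDunklEigen ((α : ℂ) + β + 1) ((α : ℂ) - β) (-m) (psi (jacobiA α β) (2 * m))) :
    IsDunklEigen ((α : ℂ) + β + 1) ((α : ℂ) - β) (m + α + β + 2)
      (psi (jacobiA α β) (2 * m + 1)) := by
  have hden : (2 * m + α + β + 2 : ℂ) ≠ 0 := by
    have hm : (0 : ℝ) ≤ m := m.cast_nonneg
    exact_mod_cast (show (0 : ℝ) < 2 * m + α + β + 2 by linarith).ne'
  have ha : (jacobiA α β (2 * m) : ℂ) * (2 * -m - (α + β + 1) - 1) = α - β := by
    rw [jacobiA_two_mul]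
    push_cast
    field_simp
    ring
  convert (h.mul_reflect_sub ha).congr (psi_two_mul_add_one_eqOn _ m) using 1
  ring

lemma IsDunklEigen.psi_jacobiA_two_mul_add_two (hαβ : 0 < α + β + 2) {m : ℕ}
    (h : IsDunklEigen ((α : ℂ) + β + 1) ((α : ℂ) - β) (m + α + β + 2)
      (psi (jacobiA α β) (2 * m + 1))) :
    IsDunklEigen ((α : ℂ) + β + 1) ((α : ℂ) - β) (-(m + 1 : ℕ))
      (psi (jacobiA α β) (2 * (m + 1))) := by
  have hden : (2 * m + α + β + 3 : ℂ) ≠ 0 := by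
    have hm : (0 : ℝ) ≤ m := m.cast_nonneg
    exact_mod_cast (show (0 : ℝ) < 2 * m + α + β + 3 by linarith).ne'
  have ha : (jacobiA α β (2 * m + 1) : ℂ) * (α + β + 1 - 2 * (m + α + β + 2)) = α + β + 1 := by
    rw [jacobiA_two_mul_add_one]
    push_cast
    field_simp
    ring
  convert (h.reflect_sub ha).congr (psi_two_mul_add_two_eqOn _ m) using 1
  push_cast
  ring

lemma isDunklEigen_psi_jacobiA (hαβ : 0 < α + β + 2) (m : ℕ) :
    IsDunklEigen ((α : ℂ) + β + 1) ((α : ℂ) - β) (-m) (psi (jacobiA α β) (2 * m)) := by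
  induction m with
  | zero => simpa [psi_zero] using IsDunklEigen.const_one
  | succ m ih => exact ((ih.psi_jacobiA_two_mul_add_one hαβ).psi_jacobiA_two_mul_add_two hαβ)

end Jacobi

/-- the Dunkl-type eigenvalue equation of the CMV Laurent polynomials
ψ_n(z;1) associated with the Jacobi Verblunsky parameters. -/
theorem stmt_3 (α β : ℝ) (hα : -1 < α) (hβ : -1 < β) (n : ℕ) (z : ℂ)
    (hz : z ≠ 0) (hz2 : z ^ 2 ≠ 1) :
    z * deriv (psi (jacobiA α β) n) z
      + z * (((α : ℂ) + β + 1) * z + ((α : ℂ) - β)) / (1 - z ^ 2)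
        * (psi (jacobiA α β) n z⁻¹ - psi (jacobiA α β) n z)
      = (if Even n then -(n : ℂ) / 2 else ((n : ℂ) + 1) / 2 + (α : ℂ) + β + 1)
        * psi (jacobiA α β) n z := by
  have hαβ : 0 < α + β + 2 := by linarith
  obtain ⟨m, rfl | rfl⟩ := Nat.even_or_odd' n
  · rw [if_pos (even_two_mul m), show -((2 * m : ℕ) : ℂ) / 2 = -m by push_cast; ring]
    exact (isDunklEigen_psi_jacobiA hαβ m).2 z hz hz2
  · rw [if_neg (Nat.not_even_bit1 m),
      show (((2 * m + 1 : ℕ) : ℂ) + 1) / 2 + α + β + 1 = m + α + β + 2 by push_cast; ring]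
    exact ((isDunklEigen_psi_jacobiA hαβ m).psi_jacobiA_two_mul_add_one hαβ).2 z hz hz2
end

section
/- For all integers k ≥ 0, all integers j with 0 ≤ j ≤ N−1, and all z ∈ ℂ with z ≠ 0, the sieved Jacobi OPUC satisfy Φ_{Nk+j}(z;N) = z^j·Φ_k(z^N;1). -/
open Finset

/-- the sieved Jacobi OPUC satisfy Φ_{Nk+j}(z;N) = z^j Φ_k(z^N;1). -/
theorem stmt_4 (α β : ℝ) (hα : -1 < α) (hβ : -1 < β) (N : ℕ) (hN : 1 ≤ N)
    (k j : ℕ) (hj : j ≤ N - 1) (z : ℂ) (hz : z ≠ 0) :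
    Phi (sievedA α β N) (N * k + j) z = z ^ j * Phi (jacobiA α β) k (z ^ N) := by
  obtain ⟨M, rfl⟩ : ∃ M, N = M + 1 := ⟨N - 1, by omega⟩
  have hstep : ∀ n : ℕ, ¬ (M + 1) ∣ (n + 1) → ∀ w : ℂ,
      Phi (sievedA α β (M + 1)) (n + 1) w = w * Phi (sievedA α β (M + 1)) n w := by
    intro n h w
    have hc : sievedA α β (M + 1) n = 0 := by simp [sievedA, h]
    simp [Phi, hc]
  have main : ∀ k, ∀ j, j ≤ M → ∀ z : ℂ, z ≠ 0 →
      Phi (sievedA α β (M + 1)) ((M + 1) * k + j) z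
        = z ^ j * Phi (jacobiA α β) k (z ^ (M + 1)) := by
    intro k
    induction k with
    | zero =>
      intro j hj
      induction j with
      | zero => intro z hz; simp [Phi]
      | succ j ih =>
        intro z hz
        have hj' : j ≤ M := by omega
        have hnd : ¬ (M + 1) ∣ ((M + 1) * 0 + j + 1) := by
          intro hd
          rw [Nat.mul_zero, Nat.zero_add] at hd
          have := Nat.le_of_dvd (by omega) hd
          omega
        rw [show (M + 1) * 0 + (j + 1) = ((M + 1) * 0 + j) + 1 from rfl,
          hstep _ hnd, ih hj' z hz]
        ring
    | succ k ihk =>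
      intro j hj
      induction j with
      | zero =>
        intro z hz
        have hkey : (M + 1) * (k + 1) + 0 = ((M + 1) * k + M) + 1 := by ring
        rw [hkey]
        have ha : sievedA α β (M + 1) ((M + 1) * k + M) = jacobiA α β k := by
          have hd : (M + 1) ∣ ((M + 1) * k + M + 1) := ⟨k + 1, by ring⟩
          have h1 : (M + 1) * k + M + 1 = (M + 1) * (k + 1) := by ring
          unfold sievedA
          rw [if_pos hd, h1, Nat.mul_div_cancel_left _ (by omega : 0 < M + 1)]
          simp
        have hiz := ihk M le_rfl z hz
        have hiz' := ihk M le_rfl z⁻¹ (inv_ne_zero hz)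
        have hzM : (z : ℂ) ^ (M + 1) ≠ 0 := pow_ne_zero _ hz
        rw [show Phi (sievedA α β (M + 1)) ((M + 1) * k + M + 1) z
            = z * Phi (sievedA α β (M + 1)) ((M + 1) * k + M) z
              - (sievedA α β (M + 1) ((M + 1) * k + M) : ℂ)
                * z ^ ((M + 1) * k + M)
                * Phi (sievedA α β (M + 1)) ((M + 1) * k + M) z⁻¹ from rfl,
          ha, hiz, hiz']
        rw [show Phi (jacobiA α β) (k + 1) (z ^ (M + 1))
            = z ^ (M + 1) * Phi (jacobiA α β) k (z ^ (M + 1))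
              - (jacobiA α β k : ℂ) * (z ^ (M + 1)) ^ k
                * Phi (jacobiA α β) k ((z ^ (M + 1))⁻¹) from rfl]
        rw [inv_pow]
        field_simp
        ring
      | succ j ih =>
        intro z hz
        have hj' : j ≤ M := by omega
        have hnd : ¬ (M + 1) ∣ ((M + 1) * (k + 1) + j + 1) := by
          intro hd
          have hd2 : (M + 1) ∣ (j + 1) := by
            have : (M + 1) * (k + 1) + j + 1 = (M + 1) * (k + 1) + (j + 1) := by ring
            rw [this] at hd
            exact (Nat.dvd_add_right ⟨k + 1, rfl⟩).mp hd
          have := Nat.le_of_dvd (by omega) hd2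
          omega
        rw [show (M + 1) * (k + 1) + (j + 1) = ((M + 1) * (k + 1) + j) + 1 from rfl,
          hstep _ hnd, ih hj' z hz]
        ring
  simpa using main k j (by omega) z hz
end

section
/- Let N ≥ 1 be an odd integer and q = exp(2πi/N). For all z ∈ ℂ with z ≠ 0 and z^{2N} ≠ 1, Σ_{k=0}^{N−1} A_k(z;N) = −N·((α+β+1)z^{2N} + (α−β)z^N)/(z^{2N} − 1), where A_k(z;N) = ((α+β+1)z² + ρ_k(α−β)z)/(q^k − z²) with ρ_k = q^{k/2} for k even and ρ_k = q^{(k−N)/2} for k odd. -/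
open Finset

/-!
For odd `N`, `ζ = q ^ ((N + 1) / 2)` is again a primitive `N`-th root of unity, `ζ ^ 2 = q`, and
`ρ_k = ζ ^ k`. Partial fractions then give
`A_k(z) = z ((α + 1/2) / (ζ^k - z) - (β + 1/2) / (ζ^k + z))`,
and the sum over `k` is computed from `∑ₖ 1 / (ζ^k - z) = N z^(N-1) / (1 - z^N)`, the
logarithmic derivative of `X^N - 1 = ∏ₖ (X - ζ^k)`. The latter follows by expanding each
term as a geometric sum in `z` and using that `∑ₖ ζ^(jk)` vanishes for `0 < j < N`.
-/

lemma sub_ne_zero_of_pow_eq_one {R : Type*} [Ring R] {N : ℕ} {w z : R} (hw : w ^ N = 1)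
    (hz : z ^ N ≠ 1) : w - z ≠ 0 :=
  fun h => hz (by rwa [← sub_eq_zero.mp h])

lemma inv_sub_eq_geom_sum₂_div {K : Type*} [Field K] {N : ℕ} {w z : K} (hw : w ^ N = 1)
    (hz : z ^ N ≠ 1) :
    (w - z)⁻¹ = (∑ j ∈ range N, w ^ j * z ^ (N - 1 - j)) / (1 - z ^ N) := by
  rw [eq_div_iff (sub_ne_zero.mpr hz.symm), ← hw, ← geom_sum₂_mul, mul_comm,
    mul_inv_cancel_right₀ (sub_ne_zero_of_pow_eq_one hw hz)]

lemma IsPrimitiveRoot.sum_pow_pow_eq_zero {K : Type*} [Field K] {N j : ℕ} {ζ : K}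
    (hζ : IsPrimitiveRoot ζ N) (hj0 : 0 < j) (hjN : j < N) :
    ∑ k ∈ range N, (ζ ^ k) ^ j = 0 := by
  simp_rw [← pow_mul, mul_comm _ j, pow_mul]
  rw [geom_sum_eq (hζ.pow_ne_one_of_pos_of_lt hj0.ne' hjN), ← pow_mul, mul_comm, pow_mul,
    hζ.pow_eq_one, one_pow, sub_self, zero_div]

lemma IsPrimitiveRoot.sum_inv_pow_sub {K : Type*} [Field K] {N : ℕ} {ζ : K}
    (hζ : IsPrimitiveRoot ζ N) {z : K} (hz : z ^ N ≠ 1) :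
    ∑ k ∈ range N, (ζ ^ k - z)⁻¹ = N * z ^ (N - 1) / (1 - z ^ N) := by
  have hroot (k : ℕ) : (ζ ^ k) ^ N = 1 := by
    rw [← pow_mul, mul_comm, pow_mul, hζ.pow_eq_one, one_pow]
  rw [sum_congr rfl fun k _ => inv_sub_eq_geom_sum₂_div (hroot k) hz, ← sum_div, sum_comm]
  simp_rw [← sum_mul]
  rw [sum_eq_single 0 (fun j hj hj0 => ?_) fun h0 => ?_]
  · simp
  · rw [hζ.sum_pow_pow_eq_zero (Nat.pos_of_ne_zero hj0) (mem_range.mp hj), zero_mul]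
  · obtain rfl : N = 0 := by simpa using h0
    simp

lemma IsPrimitiveRoot.sum_inv_pow_add {K : Type*} [Field K] {N : ℕ} {ζ : K}
    (hζ : IsPrimitiveRoot ζ N) (hN : Odd N) {z : K} (hz : z ^ N ≠ -1) :
    ∑ k ∈ range N, (ζ ^ k + z)⁻¹ = N * z ^ (N - 1) / (1 + z ^ N) := by
  have hz' : (-z) ^ N ≠ 1 := by rwa [hN.neg_pow, Ne, neg_eq_iff_eq_neg]
  simpa only [sub_neg_eq_add, hN.neg_pow, (Nat.Odd.sub_odd hN odd_one).neg_pow] using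
    hζ.sum_inv_pow_sub hz'

lemma sq_pow_half_succ_of_pow_eq_one {M : Type*} [Monoid M] {q : M} {N : ℕ} (hq : q ^ N = 1)
    (hN : Odd N) : (q ^ ((N + 1) / 2)) ^ 2 = q := by
  obtain ⟨s, rfl⟩ := hN
  rw [← pow_mul, show (2 * s + 1 + 1) / 2 * 2 = 2 * s + 1 + 1 by omega, pow_succ, hq, one_mul]

lemma IsPrimitiveRoot.pow_half_succ {M : Type*} [CommMonoid M] {q : M} {N : ℕ}
    (hq : IsPrimitiveRoot q N) (hN : Odd N) : IsPrimitiveRoot (q ^ ((N + 1) / 2)) N := by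
  obtain ⟨s, rfl⟩ := hN
  refine hq.pow_of_coprime _ ?_
  rw [show (2 * s + 1 + 1) / 2 = s + 1 by omega, show 2 * s + 1 = s + (s + 1) by omega,
    Nat.coprime_add_self_right, Nat.coprime_self_add_left]
  exact Nat.coprime_one_left s

lemma zpow_eq_zpow_of_dvd_sub {G₀ : Type*} [GroupWithZero G₀] {q : G₀} {N : ℕ}
    (hq0 : q ≠ 0) (hq : q ^ N = 1) {a b : ℤ} (h : (N : ℤ) ∣ b - a) : q ^ a = q ^ b := by
  obtain ⟨t, ht⟩ := h
  rw [show b = a + N * t by omega, zpow_add₀ hq0, zpow_mul, zpow_natCast, hq, one_zpow, mul_one]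

lemma rho_eq_pow {G₀ : Type*} [GroupWithZero G₀] {q : G₀} {N : ℕ} (hq : q ^ N = 1)
    (hN : Odd N) (k : ℕ) :
    (if Even k then q ^ ((k : ℤ) / 2) else q ^ (((k : ℤ) - N) / 2))
      = (q ^ ((N + 1) / 2)) ^ k := by
  have hq0 : q ≠ 0 := by rintro rfl; simp [zero_pow hN.pos.ne'] at hq
  obtain ⟨s, rfl⟩ := hN
  rw [show (2 * s + 1 + 1) / 2 = s + 1 by omega, ← pow_mul, ← zpow_natCast]
  split_ifs with hk
  · obtain ⟨m, rfl⟩ := hk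
    rw [show ((m + m : ℕ) : ℤ) / 2 = m by omega]
    exact zpow_eq_zpow_of_dvd_sub hq0 hq ⟨m, by push_cast; ring⟩
  · obtain ⟨m, rfl⟩ := Nat.not_even_iff_odd.mp hk
    rw [show ((2 * m + 1 : ℕ) - (2 * s + 1 : ℕ) : ℤ) / 2 = m - s by omega]
    exact zpow_eq_zpow_of_dvd_sub hq0 hq ⟨m + 1, by push_cast; ring⟩

lemma mul_sq_add_mul_div_sq_sub_sq {K : Type*} [Field K] (h2 : (2 : K) ≠ 0) {w z : K}
    (hsub : w - z ≠ 0) (hadd : w + z ≠ 0) (a b : K) :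
    (a * z ^ 2 + w * b * z) / (w ^ 2 - z ^ 2)
      = z * ((b + a) / 2 * (w - z)⁻¹ + (b - a) / 2 * (w + z)⁻¹) := by
  rw [sq_sub_sq]
  field_simp
  ring

lemma Acoef_of_odd (α β : ℝ) {N : ℕ} (hN : Odd N) (k : ℕ) {z : ℂ} (hz : z ^ N ≠ 1)
    (hz' : z ^ N ≠ -1) :
    Acoef α β N k z = z * ((α + 1 / 2) * ((qN N ^ ((N + 1) / 2)) ^ k - z)⁻¹
      - (β + 1 / 2) * ((qN N ^ ((N + 1) / 2)) ^ k + z)⁻¹) := by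
  set ζ := qN N ^ ((N + 1) / 2)
  have hq : IsPrimitiveRoot (qN N) N := Complex.isPrimitiveRoot_exp N hN.pos.ne'
  have hρ := rho_eq_pow hq.pow_eq_one hN k
  have hqk : qN N ^ k = (ζ ^ k) ^ 2 := by
    rw [← sq_pow_half_succ_of_pow_eq_one hq.pow_eq_one hN]
    ring
  have hζk : (ζ ^ k) ^ N = 1 := by
    rw [← pow_mul, mul_comm, pow_mul, (hq.pow_half_succ hN).pow_eq_one, one_pow]
  have hsub : ζ ^ k - z ≠ 0 := sub_ne_zero_of_pow_eq_one hζk hz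
  have hadd : ζ ^ k + z ≠ 0 := by
    rw [← sub_neg_eq_add]
    exact sub_ne_zero_of_pow_eq_one hζk (by rwa [hN.neg_pow, Ne, neg_eq_iff_eq_neg])
  rw [Acoef, if_neg (Nat.not_even_iff_odd.mpr hN), hρ, hqk,
    mul_sq_add_mul_div_sq_sub_sq two_ne_zero hsub hadd]
  ring

theorem stmt_8_general (α β : ℝ) (N : ℕ) (hNo : Odd N) (z : ℂ)
    (hz2 : z ^ (2 * N) ≠ 1) :
    ∑ k ∈ Finset.range N, Acoef α β N k z
      = -(N : ℂ) * (((α : ℂ) + β + 1) * z ^ (2 * N) + ((α : ℂ) - β) * z ^ N)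
          / (z ^ (2 * N) - 1) := by
  obtain ⟨hz, hz'⟩ : z ^ N ≠ 1 ∧ z ^ N ≠ -1 := by
    rwa [mul_comm, pow_mul, Ne, sq_eq_one_iff, not_or] at hz2
  have hq : IsPrimitiveRoot (qN N) N := Complex.isPrimitiveRoot_exp N hNo.pos.ne'
  have hζ := hq.pow_half_succ hNo
  rw [sum_congr rfl fun k _ => Acoef_of_odd α β hNo k hz hz', ← mul_sum, sum_sub_distrib,
    ← mul_sum, ← mul_sum, hζ.sum_inv_pow_sub hz, hζ.sum_inv_pow_add hNo hz']
  have h₁ : (1 : ℂ) - z ^ N ≠ 0 := sub_ne_zero.mpr (Ne.symm hz)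
  have h₂ : (1 : ℂ) + z ^ N ≠ 0 := by rwa [add_comm, Ne, add_eq_zero_iff_eq_neg]
  have hzN : z * z ^ (N - 1) = z ^ N := mul_pow_sub_one hNo.pos.ne' z
  rw [mul_comm 2 N, pow_mul, show (z ^ N) ^ 2 - 1 = -((1 - z ^ N) * (1 + z ^ N)) by ring]
  generalize z ^ (N - 1) = y at hzN ⊢
  generalize z ^ N = w at hzN h₁ h₂ ⊢
  subst hzN
  field_simp
  ring

/-- for odd N ≥ 1, Σ_{k=0}^{N-1} A_k(z;N) = -B(z). -/
theorem stmt_8 (α β : ℝ) (N : ℕ) (hN : 1 ≤ N) (hNo : Odd N) (z : ℂ) (hz : z ≠ 0)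
    (hz2 : z ^ (2 * N) ≠ 1) :
    ∑ k ∈ Finset.range N, Acoef α β N k z
      = -(N : ℂ) * (((α : ℂ) + β + 1) * z ^ (2 * N) + ((α : ℂ) - β) * z ^ N)
          / (z ^ (2 * N) - 1) :=
  stmt_8_general α β N hNo z hz2
end

section
/- Let N ≥ 1 be an integer and q = exp(2πi/N). For every integer k with 1 ≤ k ≤ N−1 and every z ∈ ℂ with z ≠ 0 and z^{2N} ≠ 1, one has Σ_{i=0}^{N−1} A_i(z;N)·A_{(i+k) mod N}(q^i/z; N) = 0. -/
open Finset

lemma qN_pow_self (N : ℕ) (hN : 1 ≤ N) : qN N ^ N = 1 := by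
  rw [qN, ← Complex.exp_nat_mul]
  have hN0 : (N : ℂ) ≠ 0 := Nat.cast_ne_zero.mpr (by omega)
  rw [show (N : ℂ) * (2 * Real.pi * Complex.I / N) = 2 * Real.pi * Complex.I by field_simp]
  exact Complex.exp_two_pi_mul_I


lemma mod_cancel (N : ℕ) (hN : 0 < N) (a r : ℕ) (ha : a < N) :
    ((a + r) % N + (N - r % N)) % N = a := by
  obtain ⟨v, u, hu, hr⟩ : ∃ v u, u < N ∧ r = N * v + u :=
    ⟨r / N, r % N, Nat.mod_lt _ hN, (Nat.div_add_mod r N).symm⟩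
  have hu' : r % N = u := by rw [hr, Nat.mul_add_mod, Nat.mod_eq_of_lt hu]
  rw [hu']
  have h2 : ((a + r) % N + (N - u)) % N = (a + r + (N - u)) % N :=
    Nat.ModEq.add_right (N - u) (Nat.mod_modEq (a + r) N)
  rw [h2, show a + r + (N - u) = a + N * v + N by omega,
    Nat.add_mod_right, Nat.add_mul_mod_self_left, Nat.mod_eq_of_lt ha]

lemma mod_cancel' (N : ℕ) (hN : 0 < N) (a r : ℕ) (ha : a < N) :
    ((a + (N - r % N)) % N + r) % N = a := by
  obtain ⟨v, u, hu, hr⟩ : ∃ v u, u < N ∧ r = N * v + u :=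
    ⟨r / N, r % N, Nat.mod_lt _ hN, (Nat.div_add_mod r N).symm⟩
  have hu' : r % N = u := by rw [hr, Nat.mul_add_mod, Nat.mod_eq_of_lt hu]
  rw [hu']
  have h2 : ((a + (N - u)) % N + r) % N = (a + (N - u) + r) % N :=
    Nat.ModEq.add_right r (Nat.mod_modEq (a + (N - u)) N)
  rw [h2, show a + (N - u) + r = a + N * v + N by omega,
    Nat.add_mod_right, Nat.add_mul_mod_self_left, Nat.mod_eq_of_lt ha]

lemma sum_shift (N r : ℕ) (hN : 0 < N) (f : ℕ → ℂ) :
    ∑ i ∈ Finset.range N, f ((i + r) % N) = ∑ i ∈ Finset.range N, f i := by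
  apply Finset.sum_nbij' (i := fun a => (a + r) % N) (j := fun b => (b + (N - r % N)) % N)
  · intro a ha; simp only [Finset.mem_range] at *; exact Nat.mod_lt _ hN
  · intro a ha; simp only [Finset.mem_range] at *; exact Nat.mod_lt _ hN
  · intro a ha; simp only [Finset.mem_range] at ha; exact mod_cancel N hN a r ha
  · intro a ha; simp only [Finset.mem_range] at ha; exact mod_cancel' N hN a r ha
  · intro a ha; rfl


lemma pow_mod_eq' {w : ℂ} {N : ℕ} (hw : w ^ N = 1) (a : ℕ) : w ^ (a % N) = w ^ a := by
  conv_rhs => rw [← Nat.mod_add_div a N]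
  rw [pow_add, pow_mul, hw, one_pow, mul_one]

noncomputable def Fe (s d qq z : ℂ) (k j : ℕ) : ℂ :=
  (s + (-1 : ℂ) ^ j * d) * (s + (-1 : ℂ) ^ (j + k) * d) * z ^ 2 /
    ((qq ^ k - 1) * (qq ^ j - z ^ 2))

lemma even_key (s d qq z : ℂ) (N k i : ℕ) (hN : 0 < N) (hkN : k < N)
    (hq1 : qq ^ N = 1) (hq0 : qq ≠ 0) (hqk : qq ^ k ≠ 1) (hz : z ≠ 0)
    (hzq : ∀ j : ℕ, z ^ 2 ≠ qq ^ j) (hNe : Even N) :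
    (s + (-1 : ℂ) ^ i * d) * z ^ 2 / (qq ^ i - z ^ 2) *
      ((s + (-1 : ℂ) ^ ((i + k) % N) * d) * (qq ^ i / z) ^ 2 /
        (qq ^ ((i + k) % N) - (qq ^ i / z) ^ 2)) =
    Fe s d qq z k i - Fe s d qq z k ((i + (N - k)) % N) := by
  have hr : N - k + k = N := by omega
  have hr' : k + (N - k) = N := by omega
  have hd1 : ∀ j : ℕ, qq ^ j - z ^ 2 ≠ 0 := fun j => sub_ne_zero.mpr (hzq j).symm
  have hneg1 : (-1 : ℂ) ^ N = 1 := hNe.neg_one_pow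
  have hnk : (-1 : ℂ) ^ (N - k) = (-1 : ℂ) ^ k := by
    have h1 : (-1 : ℂ) ^ (N - k) * (-1 : ℂ) ^ k = 1 := by rw [← pow_add, hr, hneg1]
    have h2 : (-1 : ℂ) ^ k * (-1 : ℂ) ^ k = 1 := by
      rw [← pow_add, ← two_mul, pow_mul]; norm_num
    exact mul_right_cancel₀ (pow_ne_zero k (by norm_num)) (h1.trans h2.symm)
  have hqnk : qq ^ k * qq ^ (N - k) = 1 := by rw [← pow_add, hr', hq1]
  have hqkinv : qq ^ (N - k) = (qq ^ k)⁻¹ := eq_inv_of_mul_eq_one_right hqnk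
  have hqi0 : qq ^ i ≠ 0 := pow_ne_zero _ hq0
  have hqk0 : qq ^ k ≠ 0 := pow_ne_zero _ hq0
  have hkey2 : ∀ a b : ℕ, qq ^ a * z ^ 2 - qq ^ b ≠ 0 := by
    intro a b h
    apply hzq (b + a * (N - 1))
    have e : a + (b + a * (N - 1)) = b + a * N := by
      obtain ⟨n, rfl⟩ : ∃ n, N = n + 1 := ⟨N - 1, by omega⟩
      simp only [Nat.add_sub_cancel]; ring
    have hpow : qq ^ a * qq ^ (b + a * (N - 1)) = qq ^ b := by
      rw [← pow_add, e, pow_add, pow_mul', hq1, one_pow, mul_one]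
    have h' : qq ^ a * z ^ 2 = qq ^ b := sub_eq_zero.mp h
    exact mul_left_cancel₀ (pow_ne_zero a hq0) (h'.trans hpow.symm)
  have hA := hd1 i
  have hB : qq ^ i * qq ^ k - (qq ^ i / z) ^ 2 ≠ 0 := by
    intro h
    apply hkey2 k i
    have h2 : (qq ^ k * z ^ 2 - qq ^ i) * qq ^ i = (qq ^ i * qq ^ k - (qq ^ i / z) ^ 2) * z ^ 2 := by
      field_simp
    rw [h, zero_mul] at h2
    rcases mul_eq_zero.mp h2 with h3 | h3
    · exact h3
    · exact absurd h3 hqi0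
  have hC : qq ^ i * (qq ^ k)⁻¹ - z ^ 2 ≠ 0 := by
    rw [← hqkinv, ← pow_add]; exact hd1 _
  have hqk1 : qq ^ k - 1 ≠ 0 := sub_ne_zero.mpr hqk
  simp only [Fe]
  simp only [pow_add]
  rw [pow_mod_eq' hq1 (i + k), pow_mod_eq' hneg1 (i + k),
    pow_mod_eq' hq1 (i + (N - k)), pow_mod_eq' hneg1 (i + (N - k))]
  simp only [pow_add]
  rw [hnk, hqkinv]
  rcases Nat.even_or_odd i with hi | hi <;> rcases Nat.even_or_odd k with hk2 | hk2 <;>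
    simp only [hi.neg_one_pow, hk2.neg_one_pow] <;>
  rw [div_mul_div_comm,
    div_sub_div _ _ (mul_ne_zero hqk1 hA) (mul_ne_zero hqk1 hC),
    div_eq_div_iff (mul_ne_zero hA hB)
      (mul_ne_zero (mul_ne_zero hqk1 hA) (mul_ne_zero hqk1 hC))] <;>
  field_simp <;> ring



lemma rho_eq (qq : ℂ) (N T j : ℕ) (hT : N = 2 * T + 1) (hq1 : qq ^ N = 1) (hq0 : qq ≠ 0) :
    (if Even j then qq ^ ((j : ℤ) / 2) else qq ^ (((j : ℤ) - (N : ℤ)) / 2)) =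
      qq ^ ((T + 1) * j) := by
  rcases Nat.even_or_odd j with hj | hj
  · obtain ⟨c, hc⟩ := hj
    have hj' : Even j := ⟨c, hc⟩
    rw [if_pos hj']
    have e1 : (j : ℤ) / 2 = (c : ℤ) := by omega
    rw [e1, zpow_natCast]
    have e2 : (T + 1) * j = N * c + c := by rw [hc, hT]; ring
    rw [e2, pow_add, pow_mul, hq1, one_pow, one_mul]
  · obtain ⟨c, hc⟩ := hj
    have hj' : ¬ Even j := by rw [Nat.even_iff]; omega
    rw [if_neg hj']
    have e1 : ((j : ℤ) - (N : ℤ)) / 2 = (c : ℤ) - (T : ℤ) := by omega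
    rw [e1, zpow_sub₀ hq0, zpow_natCast, zpow_natCast, div_eq_iff (pow_ne_zero T hq0),
      ← pow_add]
    have e2 : (T + 1) * j + T = (c + 1) * N + c := by rw [hc, hT]; ring
    rw [e2, pow_add, pow_mul', hq1, one_pow, one_mul]

noncomputable def Fo (s d qq z : ℂ) (m k j : ℕ) : ℂ :=
  z * (s + d) * (s + qq ^ (m * k) * d) / (2 * (1 - qq ^ k) * (qq ^ (m * j) - z)) -
    z * (s - d) * (s - qq ^ (m * k) * d) / (2 * (1 - qq ^ k) * (qq ^ (m * j) + z))

lemma odd_key (s d qq z : ℂ) (N k i : ℕ) (hN : 0 < N) (hkN : k < N)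
    (hq1 : qq ^ N = 1) (hq0 : qq ≠ 0) (hqk : qq ^ k ≠ 1) (hz : z ≠ 0)
    (hzq : ∀ j : ℕ, z ^ 2 ≠ qq ^ j) (T : ℕ) (hT : N = 2 * T + 1) :
    (s * z ^ 2 + qq ^ ((T + 1) * i) * d * z) / (qq ^ i - z ^ 2) *
      ((s * (qq ^ i / z) ^ 2 + qq ^ ((T + 1) * ((i + k) % N)) * d * (qq ^ i / z)) /
        (qq ^ ((i + k) % N) - (qq ^ i / z) ^ 2)) =
    Fo s d qq z (T + 1) k ((i + (N - k)) % N) - Fo s d qq z (T + 1) k i := by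
  have hd1 : ∀ j : ℕ, qq ^ j - z ^ 2 ≠ 0 := fun j => sub_ne_zero.mpr (hzq j).symm
  have hqi0 : qq ^ i ≠ 0 := pow_ne_zero _ hq0
  have ht0 : qq ^ ((T + 1) * i) ≠ 0 := pow_ne_zero _ hq0
  have hu0 : qq ^ ((T + 1) * k) ≠ 0 := pow_ne_zero _ hq0
  have hkey2 : ∀ a b : ℕ, qq ^ a * z ^ 2 - qq ^ b ≠ 0 := by
    intro a b h
    apply hzq (b + a * (N - 1))
    have e : a + (b + a * (N - 1)) = b + a * N := by
      obtain ⟨n, rfl⟩ : ∃ n, N = n + 1 := ⟨N - 1, by omega⟩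
      simp only [Nat.add_sub_cancel]; ring
    have hpow : qq ^ a * qq ^ (b + a * (N - 1)) = qq ^ b := by
      rw [← pow_add, e, pow_add, pow_mul', hq1, one_pow, mul_one]
    have h' : qq ^ a * z ^ 2 = qq ^ b := sub_eq_zero.mp h
    exact mul_left_cancel₀ (pow_ne_zero a hq0) (h'.trans hpow.symm)
  -- exponent normalizations
  have hmod : ∀ a : ℕ, qq ^ ((T + 1) * (a % N)) = qq ^ ((T + 1) * a) := by
    intro a
    rw [← pow_mod_eq' hq1 ((T + 1) * (a % N)), ← pow_mod_eq' hq1 ((T + 1) * a)]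
    congr 1
    exact Nat.ModEq.mul_left (T + 1) (Nat.mod_modEq a N)
  have hti : qq ^ i = (qq ^ ((T + 1) * i)) ^ 2 := by
    rw [← pow_mul]
    have e : (T + 1) * i * 2 = N * i + i := by rw [hT]; ring
    rw [e, pow_add, pow_mul, hq1, one_pow, one_mul]
  have htk : qq ^ k = (qq ^ ((T + 1) * k)) ^ 2 := by
    rw [← pow_mul]
    have e : (T + 1) * k * 2 = N * k + k := by rw [hT]; ring
    rw [e, pow_add, pow_mul, hq1, one_pow, one_mul]
  have hknk : qq ^ k * qq ^ (N - k) = 1 := by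
    rw [← pow_add, show k + (N - k) = N by omega, hq1]
  have hv : qq ^ ((T + 1) * k) * qq ^ ((T + 1) * (N - k)) = 1 := by
    rw [← pow_add, ← Nat.mul_add, show k + (N - k) = N by omega, pow_mul', hq1, one_pow]
  have hvinv : qq ^ ((T + 1) * (N - k)) = (qq ^ ((T + 1) * k))⁻¹ :=
    eq_inv_of_mul_eq_one_right hv
  -- nonzero facts in final form
  have hA : (qq ^ ((T + 1) * i)) ^ 2 - z ^ 2 ≠ 0 := by rw [← hti]; exact hd1 i
  have hB : (qq ^ ((T + 1) * i)) ^ 2 * (qq ^ ((T + 1) * k)) ^ 2 -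
      ((qq ^ ((T + 1) * i)) ^ 2 / z) ^ 2 ≠ 0 := by
    rw [← hti, ← htk]
    intro h
    apply hkey2 k i
    have h2 : (qq ^ k * z ^ 2 - qq ^ i) * qq ^ i = (qq ^ i * qq ^ k - (qq ^ i / z) ^ 2) * z ^ 2 := by
      field_simp
    rw [h, zero_mul] at h2
    rcases mul_eq_zero.mp h2 with h3 | h3
    · exact h3
    · exact absurd h3 hqi0
  have htmz : qq ^ ((T + 1) * i) - z ≠ 0 := by
    intro h
    exact hA (by linear_combination (qq ^ ((T + 1) * i) + z) * h)
  have htpz : qq ^ ((T + 1) * i) + z ≠ 0 := by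
    intro h
    exact hA (by linear_combination (qq ^ ((T + 1) * i) - z) * h)
  have hw : (qq ^ ((T + 1) * i) * (qq ^ ((T + 1) * k))⁻¹) ^ 2 = qq ^ (i + (N - k)) := by
    rw [mul_pow, ← hti, inv_pow, ← htk, pow_add]
    congr 1
    exact (eq_inv_of_mul_eq_one_right hknk).symm
  have hW : (qq ^ ((T + 1) * i) * (qq ^ ((T + 1) * k))⁻¹) ^ 2 - z ^ 2 ≠ 0 := by
    rw [hw]; exact hd1 _
  have hwmz : qq ^ ((T + 1) * i) * (qq ^ ((T + 1) * k))⁻¹ - z ≠ 0 := by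
    intro h
    exact hW (by linear_combination (qq ^ ((T + 1) * i) * (qq ^ ((T + 1) * k))⁻¹ + z) * h)
  have hwpz : qq ^ ((T + 1) * i) * (qq ^ ((T + 1) * k))⁻¹ + z ≠ 0 := by
    intro h
    exact hW (by linear_combination (qq ^ ((T + 1) * i) * (qq ^ ((T + 1) * k))⁻¹ - z) * h)
  have hDk : 1 - (qq ^ ((T + 1) * k)) ^ 2 ≠ 0 := by
    rw [← htk]; exact sub_ne_zero.mpr (Ne.symm hqk)
  have h2Dk : (2 : ℂ) * (1 - (qq ^ ((T + 1) * k)) ^ 2) ≠ 0 := mul_ne_zero two_ne_zero hDk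
  -- rewrite the goal
  simp only [Fo]
  rw [pow_mod_eq' hq1 (i + k), hmod (i + k), hmod (i + (N - k))]
  simp only [Nat.mul_add, pow_add]
  rw [hvinv, hti, htk]
  rw [div_mul_div_comm,
    div_sub_div _ _ (mul_ne_zero h2Dk hwmz) (mul_ne_zero h2Dk hwpz),
    div_sub_div _ _ (mul_ne_zero h2Dk htmz) (mul_ne_zero h2Dk htpz),
    div_sub_div _ _
      (mul_ne_zero (mul_ne_zero h2Dk hwmz) (mul_ne_zero h2Dk hwpz))
      (mul_ne_zero (mul_ne_zero h2Dk htmz) (mul_ne_zero h2Dk htpz)),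
    div_eq_div_iff (mul_ne_zero hA hB)
      (mul_ne_zero
        (mul_ne_zero (mul_ne_zero h2Dk hwmz) (mul_ne_zero h2Dk hwpz))
        (mul_ne_zero (mul_ne_zero h2Dk htmz) (mul_ne_zero h2Dk htpz)))]
  field_simp
  ring

/-- Σ_{i=0}^{N-1} A_i(z;N) A_{(i+k) mod N}(q^i/z;N) = 0 for 1 ≤ k ≤ N-1. -/
theorem stmt_10 (α β : ℝ) (N : ℕ) (hN : 1 ≤ N) (k : ℕ) (hk1 : 1 ≤ k) (hk : k ≤ N - 1)
    (z : ℂ) (hz : z ≠ 0) (hz2 : z ^ (2 * N) ≠ 1) :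
    ∑ i ∈ Finset.range N, Acoef α β N i z * Acoef α β N ((i + k) % N) (qN N ^ i / z) = 0 := by
  have hN2 : 2 ≤ N := by omega
  have hkN : k < N := by omega
  have hq1 : qN N ^ N = 1 := qN_pow_self N hN
  have hq0 : qN N ≠ 0 := Complex.exp_ne_zero _
  have hprim : IsPrimitiveRoot (qN N) N := Complex.isPrimitiveRoot_exp N (by omega)
  have hqk : qN N ^ k ≠ 1 := hprim.pow_ne_one_of_pos_of_lt (by omega) hkN
  have hzq : ∀ j : ℕ, z ^ 2 ≠ qN N ^ j := by
    intro j h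
    apply hz2
    calc z ^ (2 * N) = (z ^ 2) ^ N := by rw [← pow_mul]
      _ = (qN N ^ j) ^ N := by rw [h]
      _ = (qN N ^ N) ^ j := by rw [← pow_mul, ← pow_mul, mul_comm]
      _ = 1 := by rw [hq1, one_pow]
  rcases Nat.even_or_odd N with hNe | hNo
  · have key : ∀ i ∈ Finset.range N,
        Acoef α β N i z * Acoef α β N ((i + k) % N) (qN N ^ i / z) =
          Fe ((α : ℂ) + β + 1) ((α : ℂ) - β) (qN N) z k i -
            Fe ((α : ℂ) + β + 1) ((α : ℂ) - β) (qN N) z k ((i + (N - k)) % N) := by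
      intro i _
      simp only [Acoef, if_pos hNe]
      exact even_key _ _ _ _ N k i (by omega) hkN hq1 hq0 hqk hz hzq hNe
    rw [Finset.sum_congr rfl key, Finset.sum_sub_distrib,
      sum_shift N (N - k) (by omega) (Fe ((α : ℂ) + β + 1) ((α : ℂ) - β) (qN N) z k),
      sub_self]
  · obtain ⟨T, hT⟩ := hNo
    have hNe' : ¬ Even N := by rw [Nat.even_iff]; omega
    have key : ∀ i ∈ Finset.range N,
        Acoef α β N i z * Acoef α β N ((i + k) % N) (qN N ^ i / z) =
          Fo ((α : ℂ) + β + 1) ((α : ℂ) - β) (qN N) z (T + 1) k ((i + (N - k)) % N) -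
            Fo ((α : ℂ) + β + 1) ((α : ℂ) - β) (qN N) z (T + 1) k i := by
      intro i _
      simp only [Acoef, if_neg hNe']
      rw [rho_eq (qN N) N T i hT hq1 hq0, rho_eq (qN N) N T ((i + k) % N) hT hq1 hq0]
      exact odd_key _ _ _ _ N k i (by omega) hkN hq1 hq0 hqk hz hzq T hT
    rw [Finset.sum_congr rfl key, Finset.sum_sub_distrib,
      sum_shift N (N - k) (by omega) (Fo ((α : ℂ) + β + 1) ((α : ℂ) - β) (qN N) z (T + 1) k)]
    exact sub_self _
end
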